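/- Let B, V_B, W_B be r×r real symmetric positive definite matrices, let U ∈ St(r,p) and let U⊥ be an orthonormal completion of U. Let D ∈ ℝ^{(p−r)×r}, set θ_U := U⊥D, let θ_B be an r×r real symmetric matrix, and set ξ := U B θ_Uᵀ + U θ_B Uᵀ + θ_U B Uᵀ. Then, with g := tr(V_B DᵀD) + tr(W_B θ_B W_B θ_B), it holds that min( (λmin(W_B⁻¹))², 2·λmin(B V_B⁻¹ B) )·g ≤ ‖ξ‖_F² ≤ max( (λmax(W_B⁻¹))², 2·λmax(B V_B⁻¹ B) )·g. -/

import Mathlib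

/-!
Because `U` and `U⊥` have orthonormal, mutually orthogonal columns, `ξ` splits into orthogonal
pieces and `‖ξ‖_F² = ‖θ_B‖_F² + 2 ‖D B‖_F²`. The two terms of `g` are the same quantities measured
against inverses of positive definite matrices: `tr(W_B θ_B W_B θ_B) = tr(C⁻¹ θ_B C⁻¹ θ_B)` with
`C = W_B⁻¹`, and `tr(V_B Dᵀ D) = tr(M⁻¹ (D B)ᵀ (D B))` with `M = B V_B⁻¹ B`. In an eigenbasis of
`C`, with entries `Z_ij` of `θ_B` and eigenvalues `c_i`, one compares `Σ Z_ij²` with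
`Σ Z_ij² / (c_i c_j)`; in an eigenbasis of `M`, with entries `F_ki` of `D B` and eigenvalues `d_i`,
one compares `Σ F_ki²` with `Σ F_ki² / d_i`. Bounding the weights by the extreme eigenvalues gives
both estimates.
-/

open Matrix

/-- The smallest eigenvalue of a (Hermitian) real matrix; junk value `0` otherwise. -/
noncomputable def eigMin {n : ℕ} (M : Matrix (Fin n) (Fin n) ℝ) : ℝ := by
  classical exact if h : M.IsHermitian then ⨅ i, h.eigenvalues i else 0

/-- The largest eigenvalue of a (Hermitian) real matrix; junk value `0` otherwise. -/
noncomputable def eigMax {n : ℕ} (M : Matrix (Fin n) (Fin n) ℝ) : ℝ := by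
  classical exact if h : M.IsHermitian then ⨆ i, h.eigenvalues i else 0

/-- The squared Frobenius norm `‖A‖_F² = tr(AᵀA)`. -/
noncomputable def frobSq {m n : ℕ} (A : Matrix (Fin m) (Fin n) ℝ) : ℝ :=
  Matrix.trace (Aᵀ * A)

section WeightedSums

variable {ι : Type*} [Fintype ι] {x w : ι → ℝ}

lemma mul_sum_inv_mul_le_sum {a : ℝ} (hx : ∀ i, 0 ≤ x i) (hw : ∀ i, 0 < w i)
    (ha : ∀ i, a ≤ w i) :
    a * ∑ i, (w i)⁻¹ * x i ≤ ∑ i, x i := by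
  rw [Finset.mul_sum]
  gcongr with i
  rw [← mul_assoc, ← div_eq_mul_inv]
  exact mul_le_of_le_one_left (hx i) ((div_le_one (hw i)).2 (ha i))

lemma sum_le_mul_sum_inv_mul {b : ℝ} (hx : ∀ i, 0 ≤ x i) (hw : ∀ i, 0 < w i)
    (hb : ∀ i, w i ≤ b) :
    ∑ i, x i ≤ b * ∑ i, (w i)⁻¹ * x i := by
  rw [Finset.mul_sum]
  gcongr with i
  rw [← mul_assoc, ← div_eq_mul_inv]
  exact le_mul_of_one_le_left (hx i) ((one_le_div (hw i)).2 (hb i))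

end WeightedSums

lemma min_mul_add_le_add {a b x y u v : ℝ} (hx : 0 ≤ x) (hy : 0 ≤ y) (hu : a * x ≤ u)
    (hv : b * y ≤ v) : min a b * (x + y) ≤ u + v := by
  nlinarith [mul_le_mul_of_nonneg_right (min_le_left a b) hx,
    mul_le_mul_of_nonneg_right (min_le_right a b) hy]

lemma add_le_max_mul_add {a b x y u v : ℝ} (hx : 0 ≤ x) (hy : 0 ≤ y) (hu : u ≤ a * x)
    (hv : v ≤ b * y) : u + v ≤ max a b * (x + y) := by
  nlinarith [mul_le_mul_of_nonneg_right (le_max_left a b) hx,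
    mul_le_mul_of_nonneg_right (le_max_right a b) hy]

section Frobenius

variable {k l m n : ℕ}

lemma frobSq_eq_sum (F : Matrix (Fin m) (Fin n) ℝ) :
    frobSq F = ∑ ij : Fin m × Fin n, F ij.1 ij.2 ^ 2 := by
  rw [Fintype.sum_prod_type_right, frobSq, trace]
  simp [mul_apply, sq]

lemma frobSq_transpose (A : Matrix (Fin m) (Fin n) ℝ) : frobSq Aᵀ = frobSq A := by
  rw [frobSq, frobSq, transpose_transpose, trace_mul_comm]

lemma frobSq_mul_of_transpose_mul_self {Q : Matrix (Fin k) (Fin m) ℝ} (hQ : Qᵀ * Q = 1)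
    (X : Matrix (Fin m) (Fin n) ℝ) : frobSq (Q * X) = frobSq X := by
  rw [frobSq, frobSq, transpose_mul, Matrix.mul_assoc, ← Matrix.mul_assoc Qᵀ, hQ, Matrix.one_mul]

lemma frobSq_mul_of_mul_transpose_self {V : Matrix (Fin n) (Fin k) ℝ} (hV : V * Vᵀ = 1)
    (X : Matrix (Fin m) (Fin n) ℝ) : frobSq (X * V) = frobSq X := by
  rw [← frobSq_transpose, transpose_mul,
    frobSq_mul_of_transpose_mul_self (by rwa [transpose_transpose]), frobSq_transpose]

lemma frobSq_add_of_transpose_mul_eq_zero {U : Matrix (Fin k) (Fin m) ℝ}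
    {V : Matrix (Fin k) (Fin n) ℝ} (hUV : Uᵀ * V = 0) (X : Matrix (Fin m) (Fin l) ℝ)
    (Y : Matrix (Fin n) (Fin l) ℝ) :
    frobSq (U * X + V * Y) = frobSq (U * X) + frobSq (V * Y) := by
  have hVU : Vᵀ * U = 0 := by
    rw [← transpose_transpose (Vᵀ * U), transpose_mul, transpose_transpose, hUV, transpose_zero]
  simp only [frobSq, transpose_add, transpose_mul, Matrix.add_mul, Matrix.mul_add, trace_add,
    Matrix.mul_assoc]
  simp only [← Matrix.mul_assoc Uᵀ, ← Matrix.mul_assoc Vᵀ, hUV, hVU, Matrix.zero_mul,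
    Matrix.mul_zero, trace_zero]
  ring

/-- The differential of `(U, B) ↦ U B Uᵀ` at `(U, B)` in the direction `(θU, θB)`. -/
noncomputable def polarTangent {k m : ℕ} (U : Matrix (Fin k) (Fin m) ℝ)
    (B θB : Matrix (Fin m) (Fin m) ℝ) (θU : Matrix (Fin k) (Fin m) ℝ) :
    Matrix (Fin k) (Fin k) ℝ :=
  U * B * θUᵀ + U * θB * Uᵀ + θU * B * Uᵀ

lemma frobSq_polarTangent {U : Matrix (Fin k) (Fin m) ℝ} {Uperp : Matrix (Fin k) (Fin n) ℝ}
    (hU : Uᵀ * U = 1) (hUperp : Uperpᵀ * Uperp = 1) (hUUperp : Uᵀ * Uperp = 0)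
    (B θB : Matrix (Fin m) (Fin m) ℝ) (D : Matrix (Fin n) (Fin m) ℝ) :
    frobSq (polarTangent U B θB (Uperp * D)) = frobSq θB + frobSq (D * Bᵀ) + frobSq (D * B) := by
  have hUperpU : Uperpᵀ * U = 0 := by
    rw [← transpose_transpose (Uperpᵀ * U), transpose_mul, transpose_transpose, hUUperp,
      transpose_zero]
  have hsplit : polarTangent U B θB (Uperp * D) =
      U * (B * Dᵀ * Uperpᵀ + θB * Uᵀ) + Uperp * (D * B * Uᵀ) := by
    simp only [polarTangent, transpose_mul, Matrix.mul_add, Matrix.mul_assoc]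
  have hfirst : frobSq (B * Dᵀ * Uperpᵀ + θB * Uᵀ) = frobSq (D * Bᵀ) + frobSq θB := by
    rw [← frobSq_transpose]
    simp only [transpose_add, transpose_mul, transpose_transpose, Matrix.mul_assoc]
    rw [frobSq_add_of_transpose_mul_eq_zero hUperpU, frobSq_mul_of_transpose_mul_self hUperp,
      frobSq_mul_of_transpose_mul_self hU, frobSq_transpose]
  rw [hsplit, frobSq_add_of_transpose_mul_eq_zero hUUperp, frobSq_mul_of_transpose_mul_self hU,
    frobSq_mul_of_transpose_mul_self hUperp, hfirst,
    frobSq_mul_of_mul_transpose_self (V := Uᵀ) (by rwa [transpose_transpose])]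
  ring

end Frobenius

namespace Matrix

variable {m n : ℕ}

namespace IsHermitian

variable {A : Matrix (Fin n) (Fin n) ℝ} (hA : A.IsHermitian)
include hA

lemma eigMin_le_eigenvalues (i : Fin n) : eigMin A ≤ hA.eigenvalues i := by
  rw [eigMin, dif_pos hA]
  exact ciInf_le (Set.finite_range _).bddBelow i

lemma eigenvalues_le_eigMax (i : Fin n) : hA.eigenvalues i ≤ eigMax A := by
  rw [eigMax, dif_pos hA]
  exact le_ciSup (Set.finite_range _).bddAbove i

lemma eigenvectorUnitary_mul_transpose :
    (hA.eigenvectorUnitary : Matrix (Fin n) (Fin n) ℝ) * (hA.eigenvectorUnitary)ᵀ = 1 := by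
  simpa [star_eq_conjTranspose] using Unitary.coe_mul_star_self hA.eigenvectorUnitary

lemma transpose_eigenvectorUnitary_mul :
    (hA.eigenvectorUnitary : Matrix (Fin n) (Fin n) ℝ)ᵀ * hA.eigenvectorUnitary = 1 := by
  simpa [star_eq_conjTranspose] using Unitary.coe_star_mul_self hA.eigenvectorUnitary

lemma transpose_eigenvectorUnitary_mul_mul :
    (hA.eigenvectorUnitary : Matrix (Fin n) (Fin n) ℝ)ᵀ * A * hA.eigenvectorUnitary =
      diagonal hA.eigenvalues := by
  simpa [star_eq_conjTranspose] using hA.conjStarAlgAut_star_eigenvectorUnitary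

end IsHermitian

lemma trace_transpose_mul_mul_of_mul_transpose_self {V : Matrix (Fin n) (Fin n) ℝ}
    (hV : V * Vᵀ = 1) (X : Matrix (Fin n) (Fin n) ℝ) : trace (Vᵀ * X * V) = trace X := by
  rw [trace_mul_cycle, hV, Matrix.one_mul]

lemma trace_diagonal_mul_transpose_mul_self (a : Fin n → ℝ) (F : Matrix (Fin m) (Fin n) ℝ) :
    trace (diagonal a * (Fᵀ * F)) = ∑ ij : Fin m × Fin n, a ij.2 * F ij.1 ij.2 ^ 2 := by
  simp only [Fintype.sum_prod_type_right, trace, diag_apply, diagonal_mul]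
  simp only [mul_apply, transpose_apply, Finset.mul_sum, sq]

lemma trace_diagonal_mul_transpose_mul_diagonal_mul (a : Fin n → ℝ)
    (Z : Matrix (Fin n) (Fin n) ℝ) :
    trace (diagonal a * Zᵀ * diagonal a * Z) =
      ∑ ij : Fin n × Fin n, a ij.1 * a ij.2 * Z ij.1 ij.2 ^ 2 := by
  simp only [Fintype.sum_prod_type_right, trace, diag_apply, Matrix.mul_assoc, diagonal_mul]
  simp only [mul_apply, transpose_apply, Finset.mul_sum, diagonal_apply, ite_mul, zero_mul,
    Finset.sum_ite_eq, Finset.mem_univ, if_true]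
  exact Finset.sum_congr rfl fun j _ => Finset.sum_congr rfl fun i _ => by ring

lemma trace_inv_sandwich_mul_gram {B V : Matrix (Fin n) (Fin n) ℝ} (hB : IsUnit B.det)
    (hV : IsUnit V.det) (hBt : Bᵀ = B) (D : Matrix (Fin m) (Fin n) ℝ) :
    trace ((B * V⁻¹ * B)⁻¹ * ((D * B)ᵀ * (D * B))) = trace (V * Dᵀ * D) := by
  rw [mul_inv_rev, mul_inv_rev, nonsing_inv_nonsing_inv V hV, transpose_mul, hBt]
  simp only [Matrix.mul_assoc]
  rw [← Matrix.mul_assoc B⁻¹ B, nonsing_inv_mul B hB, Matrix.one_mul, trace_mul_comm]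
  simp only [Matrix.mul_assoc]
  rw [mul_nonsing_inv B hB, Matrix.mul_one]

end Matrix

namespace Matrix.PosDef

variable {m n : ℕ} {A : Matrix (Fin n) (Fin n) ℝ}

lemma eigMin_nonneg (hA : A.PosDef) : 0 ≤ eigMin A := by
  rw [eigMin, dif_pos hA.1]
  exact Real.iInf_nonneg fun i => (hA.eigenvalues_pos i).le

lemma transpose_eigenvectorUnitary_mul_inv_mul (hA : A.PosDef) :
    (hA.1.eigenvectorUnitary : Matrix (Fin n) (Fin n) ℝ)ᵀ * A⁻¹ * hA.1.eigenvectorUnitary =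
      diagonal hA.1.eigenvalues⁻¹ := by
  set V : Matrix (Fin n) (Fin n) ℝ := ↑hA.1.eigenvectorUnitary
  have hV : V⁻¹ = Vᵀ := inv_eq_left_inv hA.1.transpose_eigenvectorUnitary_mul
  have hVt : Vᵀ⁻¹ = V := inv_eq_left_inv hA.1.eigenvectorUnitary_mul_transpose
  have hdiag : (diagonal hA.1.eigenvalues)⁻¹ = diagonal hA.1.eigenvalues⁻¹ := by
    refine inv_eq_left_inv ?_
    rw [diagonal_mul_diagonal, ← diagonal_one]
    congr 1
    funext i
    exact inv_mul_cancel₀ (hA.eigenvalues_pos i).ne'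
  rw [← hdiag, ← hA.1.transpose_eigenvectorUnitary_mul_mul, mul_inv_rev, mul_inv_rev, hV, hVt,
    Matrix.mul_assoc]

theorem trace_inv_mul_gram_bounds (hA : A.PosDef) (E : Matrix (Fin m) (Fin n) ℝ) :
    0 ≤ trace (A⁻¹ * (Eᵀ * E)) ∧ eigMin A * trace (A⁻¹ * (Eᵀ * E)) ≤ frobSq E ∧
      frobSq E ≤ eigMax A * trace (A⁻¹ * (Eᵀ * E)) := by
  set V : Matrix (Fin n) (Fin n) ℝ := ↑hA.1.eigenvectorUnitary
  set d := hA.1.eigenvalues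
  have hV : V * Vᵀ = 1 := hA.1.eigenvectorUnitary_mul_transpose
  have hVV : ∀ X : Matrix (Fin n) (Fin n) ℝ, V * (Vᵀ * X) = X := fun X => by
    rw [← Matrix.mul_assoc, hV, Matrix.one_mul]
  have hdiag : Vᵀ * A⁻¹ * V = diagonal d⁻¹ := hA.transpose_eigenvectorUnitary_mul_inv_mul
  have htrace : trace (A⁻¹ * (Eᵀ * E)) = trace (diagonal d⁻¹ * ((E * V)ᵀ * (E * V))) := by
    rw [← hdiag, ← trace_transpose_mul_mul_of_mul_transpose_self hV]
    simp only [transpose_mul, Matrix.mul_assoc, hVV]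
  rw [htrace, trace_diagonal_mul_transpose_mul_self, ← frobSq_mul_of_mul_transpose_self hV E,
    frobSq_eq_sum]
  simp only [Pi.inv_apply]
  refine ⟨Finset.sum_nonneg fun ij _ => mul_nonneg (inv_nonneg.2 (hA.eigenvalues_pos ij.2).le)
    (sq_nonneg _), ?_, ?_⟩
  · exact mul_sum_inv_mul_le_sum (fun _ => sq_nonneg _) (fun ij => hA.eigenvalues_pos ij.2)
      (fun ij => hA.1.eigMin_le_eigenvalues ij.2)
  · exact sum_le_mul_sum_inv_mul (fun _ => sq_nonneg _) (fun ij => hA.eigenvalues_pos ij.2)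
      (fun ij => hA.1.eigenvalues_le_eigMax ij.2)

theorem trace_inv_mul_transpose_mul_inv_mul_bounds (hA : A.PosDef)
    (Y : Matrix (Fin n) (Fin n) ℝ) :
    0 ≤ trace (A⁻¹ * Yᵀ * A⁻¹ * Y) ∧ eigMin A ^ 2 * trace (A⁻¹ * Yᵀ * A⁻¹ * Y) ≤ frobSq Y ∧
      frobSq Y ≤ eigMax A ^ 2 * trace (A⁻¹ * Yᵀ * A⁻¹ * Y) := by
  set V : Matrix (Fin n) (Fin n) ℝ := ↑hA.1.eigenvectorUnitary
  set d := hA.1.eigenvalues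
  have hV : V * Vᵀ = 1 := hA.1.eigenvectorUnitary_mul_transpose
  have hVV : ∀ X : Matrix (Fin n) (Fin n) ℝ, V * (Vᵀ * X) = X := fun X => by
    rw [← Matrix.mul_assoc, hV, Matrix.one_mul]
  have hdiag : Vᵀ * A⁻¹ * V = diagonal d⁻¹ := hA.transpose_eigenvectorUnitary_mul_inv_mul
  have htrace : trace (A⁻¹ * Yᵀ * A⁻¹ * Y) =
      trace (diagonal d⁻¹ * (Vᵀ * Y * V)ᵀ * diagonal d⁻¹ * (Vᵀ * Y * V)) := by
    rw [← hdiag, ← trace_transpose_mul_mul_of_mul_transpose_self hV]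
    simp only [transpose_mul, transpose_transpose, Matrix.mul_assoc, hVV]
  have hfrob : frobSq Y = frobSq (Vᵀ * Y * V) := by
    rw [frobSq_mul_of_mul_transpose_self hV,
      frobSq_mul_of_transpose_mul_self (by rw [transpose_transpose, hV])]
  have hd : ∀ ij : Fin n × Fin n, 0 < d ij.1 * d ij.2 := fun ij =>
    mul_pos (hA.eigenvalues_pos ij.1) (hA.eigenvalues_pos ij.2)
  rw [htrace, trace_diagonal_mul_transpose_mul_diagonal_mul, hfrob, frobSq_eq_sum]
  simp only [Pi.inv_apply, ← mul_inv]
  refine ⟨Finset.sum_nonneg fun ij _ => mul_nonneg (inv_nonneg.2 (hd ij).le) (sq_nonneg _), ?_, ?_⟩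
  · refine mul_sum_inv_mul_le_sum (fun _ => sq_nonneg _) hd fun ij => ?_
    rw [sq]
    exact mul_le_mul (hA.1.eigMin_le_eigenvalues ij.1) (hA.1.eigMin_le_eigenvalues ij.2)
      hA.eigMin_nonneg (hA.eigenvalues_pos ij.1).le
  · refine sum_le_mul_sum_inv_mul (fun _ => sq_nonneg _) hd fun ij => ?_
    rw [sq]
    exact mul_le_mul (hA.1.eigenvalues_le_eigMax ij.1) (hA.1.eigenvalues_le_eigMax ij.2)
      (hA.eigenvalues_pos ij.2).le
      ((hA.eigenvalues_pos ij.1).le.trans (hA.1.eigenvalues_le_eigMax ij.1))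

end Matrix.PosDef

/-- Spectrum bounds for the map `(θ_U, θ_B) ↦ UBθ_Uᵀ + Uθ_BUᵀ + θ_UBUᵀ` on the horizontal
space of the polar quotient geometry on fixed-rank PSD matrices. -/
theorem stmt11 {p r : ℕ}
    (B VB WB : Matrix (Fin r) (Fin r) ℝ) (hB : B.PosDef) (hVB : VB.PosDef) (hWB : WB.PosDef)
    (U : Matrix (Fin p) (Fin r) ℝ) (Uperp : Matrix (Fin p) (Fin (p - r)) ℝ)
    (hU : Uᵀ * U = 1) (hUperp : Uperpᵀ * Uperp = 1) (hUUperp : Uᵀ * Uperp = 0)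
    (D : Matrix (Fin (p - r)) (Fin r) ℝ)
    (θU : Matrix (Fin p) (Fin r) ℝ) (hθU : θU = Uperp * D)
    (θB : Matrix (Fin r) (Fin r) ℝ) (hθB : θB.IsSymm)
    (ξ : Matrix (Fin p) (Fin p) ℝ) (hξ : ξ = U * B * θUᵀ + U * θB * Uᵀ + θU * B * Uᵀ)
    (g : ℝ) (hg : g = Matrix.trace (VB * Dᵀ * D) + Matrix.trace (WB * θB * WB * θB)) :
    min ((eigMin WB⁻¹) ^ 2) (2 * eigMin (B * VB⁻¹ * B)) * g ≤ frobSq ξ ∧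
    frobSq ξ ≤ max ((eigMax WB⁻¹) ^ 2) (2 * eigMax (B * VB⁻¹ * B)) * g := by
  
  have hBt : Bᵀ = B := (isHermitian_iff_isSymm.1 hB.1).eq
  have hfrob : frobSq ξ = frobSq θB + 2 * frobSq (D * B) := by
    rw [hξ, hθU, ← polarTangent, frobSq_polarTangent hU hUperp hUUperp, hBt]
    ring
  have hM : (B * VB⁻¹ * B).PosDef := by
    simpa only [conjTranspose_eq_transpose_of_trivial, hBt] using
      hVB.inv.conjTranspose_mul_mul_same (mulVec_injective_of_isUnit hB.isUnit)
  obtain ⟨hW0, hWlo, hWhi⟩ := hWB.inv.trace_inv_mul_transpose_mul_inv_mul_bounds θB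
  obtain ⟨hM0, hMlo, hMhi⟩ := hM.trace_inv_mul_gram_bounds (D * B)
  rw [nonsing_inv_nonsing_inv WB ((isUnit_iff_isUnit_det WB).1 hWB.isUnit), hθB.eq]
    at hW0 hWlo hWhi
  rw [trace_inv_sandwich_mul_gram ((isUnit_iff_isUnit_det B).1 hB.isUnit)
    ((isUnit_iff_isUnit_det VB).1 hVB.isUnit) hBt] at hM0 hMlo hMhi
  rw [hfrob, hg, add_comm]
  exact ⟨min_mul_add_le_add hW0 hM0 hWlo (by linarith),
    add_le_max_mul_add hW0 hM0 hWhi (by linarith)⟩
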